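/- Let R be a ring, A ⪯ B subsets of R, and θ : R → S a ring homomorphism. Then θ(A) ⪯ θ(B), and the commutative square with vertices loc(R,A), loc(S,θ(A)), loc(R,B), loc(S,θ(B)), with horizontal maps the induced maps θ_A, θ_B and vertical maps p_{BA}, p_{θ(B)θ(A)}, is a pushout in the category of rings. -/
import Mathlib


/-- `α : R →+* L` is a universal (Cohn) localization of the ring `R` at the subset `A`. -/
def IsLoc {R L : Type} [Ring R] [Ring L] (A : Set R) (α : R →+* L) : Prop :=
  (∀ a ∈ A, IsUnit (α a)) ∧
  ∀ (S : Type) [Ring S], ∀ θ : R →+* S, (∀ a ∈ A, IsUnit (θ a)) →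
    ∃! θ' : L →+* S, θ'.comp α = θ

/-- if `A ⪯ B` and `θ : R → S`, then `θ(A) ⪯ θ(B)`, and the square with
horizontal maps `θ_A, θ_B` and vertical maps `p_{BA}, p_{θ(B)θ(A)}` commutes and is a
pushout in the category of rings. -/
theorem loc_square_pushout {R S LA LB MA MB : Type}
    [Ring R] [Ring S] [Ring LA] [Ring LB] [Ring MA] [Ring MB]
    (θ : R →+* S) (A B : Set R)
    (αA : R →+* LA) (αB : R →+* LB) (βA : S →+* MA) (βB : S →+* MB)
    (hA : IsLoc A αA) (hB : IsLoc B αB)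
    (hθA : IsLoc (θ '' A) βA) (hθB : IsLoc (θ '' B) βB)
    (hAB : ∀ a ∈ A, IsUnit (αB a))
    (pBA : LA →+* LB) (hp : pBA.comp αA = αB)
    (θA : LA →+* MA) (hθA' : θA.comp αA = βA.comp θ)
    (θB : LB →+* MB) (hθB' : θB.comp αB = βB.comp θ) :
    (∀ a ∈ A, IsUnit (βB (θ a))) ∧
    ∀ q : MA →+* MB, q.comp βA = βB →
      (q.comp θA = θB.comp pBA ∧
       ∀ (T : Type) [Ring T], ∀ (lam : MA →+* T) (mu : LB →+* T),
         mu.comp pBA = lam.comp θA →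
         ∃! ρ : MB →+* T, ρ.comp q = lam ∧ ρ.comp θB = mu) := by
  have hp' : ∀ r, pBA (αA r) = αB r := fun r => RingHom.congr_fun hp r
  have hθA'' : ∀ r, θA (αA r) = βA (θ r) := fun r => RingHom.congr_fun hθA' r
  have hθB'' : ∀ r, θB (αB r) = βB (θ r) := fun r => RingHom.congr_fun hθB' r
  have hunit1 : ∀ a ∈ A, IsUnit (βB (θ a)) := by
    intro a ha
    rw [← hθB'' a]
    exact (hAB a ha).map θB
  refine ⟨hunit1, ?_⟩
  intro q hq
  have hq' : ∀ s, q (βA s) = βB s := fun s => RingHom.congr_fun hq s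
  have hsq : q.comp θA = θB.comp pBA := by
    obtain ⟨u, hu, huniq⟩ := hA.2 MB (βB.comp θ) (fun a ha => hunit1 a ha)
    have h1 : (q.comp θA).comp αA = βB.comp θ := by
      ext r
      simp only [RingHom.comp_apply]
      rw [hθA'' r, hq' (θ r)]
    have h2 : (θB.comp pBA).comp αA = βB.comp θ := by
      ext r
      simp only [RingHom.comp_apply]
      rw [hp' r, hθB'' r]
    rw [huniq _ h1, huniq _ h2]
  refine ⟨hsq, ?_⟩
  intro T _ lam mu hcomm
  have hcomm' : ∀ x, mu (pBA x) = lam (θA x) := fun x => RingHom.congr_fun hcomm x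
  have einv : ∀ r : R, lam (βA (θ r)) = mu (αB r) := by
    intro r
    rw [← hθA'' r, ← hcomm' (αA r), hp' r]
  have keyθB : ∀ s ∈ θ '' B, IsUnit ((lam.comp βA) s) := by
    rintro s ⟨b, hb, rfl⟩
    simp only [RingHom.comp_apply]
    rw [einv b]
    exact (hB.1 b hb).map mu
  obtain ⟨ρ, hρ, hρu⟩ := hθB.2 T (lam.comp βA) keyθB
  have hρ' : ∀ s, ρ (βB s) = lam (βA s) := fun s => RingHom.congr_fun hρ s
  have hρq : ρ.comp q = lam := by
    obtain ⟨u, hu, huniq⟩ := hθA.2 T (lam.comp βA) (by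
      rintro s ⟨a, ha, rfl⟩
      simp only [RingHom.comp_apply]
      rw [einv a]
      exact (hAB a ha).map mu)
    have h1 : (ρ.comp q).comp βA = lam.comp βA := by
      ext s
      simp only [RingHom.comp_apply]
      rw [hq' s, hρ' s]
    rw [huniq _ h1, huniq _ rfl]
  have hρθB : ρ.comp θB = mu := by
    obtain ⟨u, hu, huniq⟩ := hB.2 T (mu.comp αB)
      (fun b hb => (hB.1 b hb).map mu)
    have h1 : (ρ.comp θB).comp αB = mu.comp αB := by
      ext r
      simp only [RingHom.comp_apply]
      rw [hθB'' r, hρ' (θ r), einv r]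
    rw [huniq _ h1, huniq _ rfl]
  refine ⟨ρ, ⟨hρq, hρθB⟩, ?_⟩
  rintro ρ' ⟨h1, h2⟩
  apply hρu
  have h1' : ∀ x, ρ' (q x) = lam x := fun x => RingHom.congr_fun h1 x
  ext s
  simp only [RingHom.comp_apply]
  rw [← hq' s, h1' (βA s)]
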